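/- arXiv:1807.10622 — 11 statements merged into one kernel-verified Lean document; each statement's English description precedes it below -/
import Mathlib

section
/- Let S be a finite subset of ℂ and let φ : S → S be a map such that for every z ∈ S, φ(z) ≠ z and |z − φ(z)| = min_{z' ∈ S \ {z}} |z − z'|. Then every element of S has at most 6 preimages under φ. -/
/-!
Split the plane around `w` into six sectors of opening `π / 3`. Two distinct points `z₁, z₂`
in the same sector subtend an angle `< π / 3` at `w`, so by the law of cosines the one farther
from `w` is strictly closer to the other one than to `w`. Hence at most one point per sector can
have `w` as a nearest neighbour.
-/

open InnerProductGeometry Real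

lemma norm_sub_lt_of_angle_lt_pi_div_three {V : Type*} [NormedAddCommGroup V]
    [InnerProductSpace ℝ V] {u v : V} (hv : v ≠ 0) (hvu : ‖v‖ ≤ ‖u‖)
    (hangle : angle u v < π / 3) : ‖u - v‖ < ‖u‖ := by
  have hcos : 1 / 2 < cos (angle u v) := by
    rw [← cos_pi_div_three]
    exact cos_lt_cos_of_nonneg_of_le_pi (angle_nonneg u v) (by linarith [pi_pos]) hangle
  have hv₀ : 0 < ‖v‖ := norm_pos_iff.2 hv
  have hpos : 0 < ‖u‖ * ‖v‖ := mul_pos (hv₀.trans_le hvu) hv₀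
  have hsq : ‖u - v‖ * ‖u - v‖ < ‖u‖ * ‖u‖ := by
    rw [norm_sub_sq_eq_norm_sq_add_norm_sq_sub_two_mul_norm_mul_norm_mul_cos_angle]
    nlinarith
  exact (mul_self_lt_mul_self_iff (norm_nonneg _) (norm_nonneg _)).2 hsq

lemma pi_div_three_le_angle_of_nearest {V : Type*} [NormedAddCommGroup V]
    [InnerProductSpace ℝ V] {w z₁ z₂ : V} (h₁ : z₁ ≠ w) (h₂ : z₂ ≠ w)
    (hd₁ : ‖z₁ - w‖ ≤ ‖z₁ - z₂‖) (hd₂ : ‖z₂ - w‖ ≤ ‖z₂ - z₁‖) :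
    π / 3 ≤ angle (z₁ - w) (z₂ - w) := by
  wlog hle : ‖z₂ - w‖ ≤ ‖z₁ - w‖ generalizing z₁ z₂
  · rw [angle_comm]
    exact this h₂ h₁ hd₂ hd₁ (le_of_not_ge hle)
  by_contra! hlt
  have := norm_sub_lt_of_angle_lt_pi_div_three (sub_ne_zero.2 h₂) hle hlt
  rw [sub_sub_sub_cancel_right] at this
  linarith

lemma Complex.angle_eq_abs_arg_sub {u v : ℂ} (hu : u ≠ 0) (hv : v ≠ 0)
    (h : |u.arg - v.arg| < π) : angle u v = |u.arg - v.arg| := by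
  have hd := abs_lt.1 h
  rw [Complex.angle_eq_abs_arg hu hv, ← Complex.arg_coe_angle_toReal_eq_arg,
    Complex.arg_div_coe_angle hu hv, ← Real.Angle.coe_sub,
    Real.Angle.toReal_coe_eq_self_iff.2 ⟨hd.1, hd.2.le⟩]

/-- `sextant z = k` iff `arg z ∈ ((k - 1) π / 3, k π / 3]`; since `arg z ∈ (-π, π]`, `k ∈ [-2, 3]`. -/
noncomputable def sextant (z : ℂ) : ℤ := ⌈z.arg / (π / 3)⌉

lemma sextant_mem_Icc (z : ℂ) : sextant z ∈ Finset.Icc (-2 : ℤ) 3 := by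
  have h₁ : -3 < z.arg / (π / 3) := by
    rw [lt_div_iff₀ (by positivity)]; linarith [Complex.neg_pi_lt_arg z]
  have h₂ : z.arg / (π / 3) ≤ 3 := by
    rw [div_le_iff₀ (by positivity)]; linarith [Complex.arg_le_pi z]
  have h₁' : -3 < sextant z := Int.lt_ceil.2 (by exact_mod_cast h₁)
  exact Finset.mem_Icc.2 ⟨by omega, Int.ceil_le.2 (by exact_mod_cast h₂)⟩

lemma abs_arg_sub_lt_of_sextant_eq {u v : ℂ} (h : sextant u = sextant v) :
    |u.arg - v.arg| < π / 3 := by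
  have hu := Int.le_ceil (u.arg / (π / 3))
  have hu' := Int.ceil_lt_add_one (u.arg / (π / 3))
  have hv := Int.le_ceil (v.arg / (π / 3))
  have hv' := Int.ceil_lt_add_one (v.arg / (π / 3))
  rw [sextant, sextant] at h
  rw [h] at hu hu'
  have : |u.arg / (π / 3) - v.arg / (π / 3)| < 1 := abs_sub_lt_iff.2 ⟨by linarith, by linarith⟩
  rwa [← sub_div, abs_div, abs_of_pos (by positivity : (0 : ℝ) < π / 3),
    div_lt_one (by positivity)] at this

lemma angle_lt_pi_div_three_of_sextant_eq {u v : ℂ} (hu : u ≠ 0) (hv : v ≠ 0)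
    (h : sextant u = sextant v) : angle u v < π / 3 := by
  have harg := abs_arg_sub_lt_of_sextant_eq h
  rwa [Complex.angle_eq_abs_arg_sub hu hv (by linarith [pi_pos])]

theorem nearest_map_preimages_le_six_general (S : Finset ℂ) (φ : ℂ → ℂ)
    (hne : ∀ z ∈ S, φ z ≠ z)
    (hmin : ∀ z ∈ S, ∀ z' ∈ S, z' ≠ z → ‖z - φ z‖ ≤ ‖z - z'‖) :
    ∀ w ∈ S, (S.filter (fun z => φ z = w)).card ≤ 6 := by
  intro w _
  by_contra! hcard
  obtain ⟨z₁, hz₁, z₂, hz₂, hz₁₂, hsextant⟩ :=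
    Finset.exists_ne_map_eq_of_card_lt_of_maps_to (t := Finset.Icc (-2 : ℤ) 3) (by simpa)
      (fun z _ => sextant_mem_Icc (z - w))
  rw [Finset.mem_filter] at hz₁ hz₂
  have hw₁ : z₁ ≠ w := fun h => hne z₁ hz₁.1 (hz₁.2.trans h.symm)
  have hw₂ : z₂ ≠ w := fun h => hne z₂ hz₂.1 (hz₂.2.trans h.symm)
  have hd₁ := hz₁.2 ▸ hmin z₁ hz₁.1 z₂ hz₂.1 hz₁₂.symm
  have hd₂ := hz₂.2 ▸ hmin z₂ hz₂.1 z₁ hz₁.1 hz₁₂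
  have hlt := angle_lt_pi_div_three_of_sextant_eq (sub_ne_zero.2 hw₁) (sub_ne_zero.2 hw₂) hsextant
  linarith [pi_div_three_le_angle_of_nearest hw₁ hw₂ hd₁ hd₂]

/-- If S ⊂ ℂ is finite and φ maps every z ∈ S to a nearest point of S distinct
from z, then every element of S has at most 6 preimages under φ. -/
theorem nearest_map_preimages_le_six (S : Finset ℂ) (φ : ℂ → ℂ)
    (hmem : ∀ z ∈ S, φ z ∈ S) (hne : ∀ z ∈ S, φ z ≠ z)
    (hmin : ∀ z ∈ S, ∀ z' ∈ S, z' ≠ z → ‖z - φ z‖ ≤ ‖z - z'‖) :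
    ∀ w ∈ S, (S.filter (fun z => φ z = w)).card ≤ 6 :=
  nearest_map_preimages_le_six_general S φ hne hmin
end

section
/- For a complex polynomial f = ∑_{i=0}^n aᵢXⁱ with aₙ ≠ 0, the Mahler measure satisfies 2^{-n}·Len(f) ≤ Mea(f) ≤ ‖f‖, where Len(f) = ∑|aᵢ| and ‖f‖ = (∑|aᵢ|²)^{1/2}. -/
/-!
By Jensen's formula `Mea f` is Mathlib's integral Mahler measure. Vieta's formulas give
`‖aᵢ‖ ≤ (n choose i) · Mea f`, and summing over `i` yields the lower bound; the upper bound is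
Landau's inequality, from Jensen's inequality and Parseval's identity on the unit circle.
-/

open Polynomial

noncomputable def Mea (f : Polynomial ℂ) : ℝ :=
  ‖f.leadingCoeff‖ * ((f.roots.map fun z => max 1 ‖z‖).prod)

theorem mea_eq_mahlerMeasure (p : ℂ[X]) : Mea p = p.mahlerMeasure :=
  (mahlerMeasure_eq_leadingCoeff_mul_prod_roots p).symm

namespace Polynomial

theorem sum_norm_coeff_le_two_pow_natDegree_mul_mahlerMeasure (p : ℂ[X]) :
    ∑ i ∈ Finset.range (p.natDegree + 1), ‖p.coeff i‖ ≤ 2 ^ p.natDegree * p.mahlerMeasure :=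
  calc ∑ i ∈ Finset.range (p.natDegree + 1), ‖p.coeff i‖
      ≤ ∑ i ∈ Finset.range (p.natDegree + 1), (p.natDegree.choose i : ℝ) * p.mahlerMeasure :=
        Finset.sum_le_sum fun i _ => norm_coeff_le_choose_mul_mahlerMeasure i p
    _ = 2 ^ p.natDegree * p.mahlerMeasure := by
        rw [← Finset.sum_mul, ← Nat.cast_sum, Nat.sum_range_choose, Nat.cast_pow, Nat.cast_ofNat]

theorem mahlerMeasure_le_sqrt_sum_range_sq_norm_coeff (p : ℂ[X]) :
    p.mahlerMeasure ≤ √(∑ i ∈ Finset.range (p.natDegree + 1), ‖p.coeff i‖ ^ 2) := by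
  rw [← sum_over_range p (f := fun _ a => ‖a‖ ^ 2) fun _ => by simp]
  exact mahlerMeasure_le_sqrt_sum_sq_norm_coeff p

end Polynomial

theorem len_mea_norm_general (f : Polynomial ℂ) :
    (2 : ℝ) ^ (-(f.natDegree : ℤ)) *
        (∑ i ∈ Finset.range (f.natDegree + 1), ‖f.coeff i‖) ≤ Mea f ∧
      Mea f ≤ Real.sqrt (∑ i ∈ Finset.range (f.natDegree + 1), ‖f.coeff i‖ ^ 2) := by
  rw [mea_eq_mahlerMeasure, zpow_neg, zpow_natCast, inv_mul_le_iff₀ (by positivity)]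
  exact ⟨sum_norm_coeff_le_two_pow_natDegree_mul_mahlerMeasure f,
    mahlerMeasure_le_sqrt_sum_range_sq_norm_coeff f⟩

/-- For f = ∑ aᵢ Xⁱ ∈ ℂ[X] of degree n with aₙ ≠ 0 (i.e. f ≠ 0):
2^{-n}·Len(f) ≤ Mea(f) ≤ ‖f‖, with Len(f) = ∑|aᵢ| and ‖f‖ = (∑|aᵢ|²)^{1/2}. -/
theorem len_mea_norm (f : Polynomial ℂ) (hf : f ≠ 0) :
    (2 : ℝ) ^ (-(f.natDegree : ℤ)) *
        (∑ i ∈ Finset.range (f.natDegree + 1), ‖f.coeff i‖) ≤ Mea f ∧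
      Mea f ≤ Real.sqrt (∑ i ∈ Finset.range (f.natDegree + 1), ‖f.coeff i‖ ^ 2) :=
  len_mea_norm_general f
end

section
/- Let f ∈ ℂ[X] have degree n, let z be a root of f of multiplicity μ(z), and let z' ≠ z be a root of f minimizing the distance to z. Then sep(z,f)^{μ(z)} · Mea(f(X+z')) ≥ |f^{[μ(z')]}(z')|, where f^{[k]} = f^{(k)}/k! and sep(z,f) = min_{y root of f, y ≠ z} |y − z|. -/
open Polynomial

/-!
Write `f = (X - z')^m * g` with `m = μ(z')`. Then `f^{[m]}(z') = g(z')`, and the roots of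
`f(X + z')` are the roots `w` of `g` shifted to `w - z'`, together with `m` zeros, which do not
contribute to the Mahler measure. So `|g(z')| = |lc f| * ∏ |z' - w|` over the roots `w` of `g`, and
each factor is at most `max 1 |w - z'|`, except the `μ(z)` factors `w = z`, for which
`|z - z'| ≤ |z - z'| * max 1 |z - z'|`.
-/

theorem Multiset.prod_map_le_pow_count_mul_prod_map_max_one {α : Type*} [DecidableEq α]
    (s : Multiset α) (x : α) {r : α → ℝ} (hr : ∀ y, 0 ≤ r y) :
    (s.map r).prod ≤ r x ^ s.count x * (s.map fun y => max 1 (r y)).prod := by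
  induction s using Multiset.induction with
  | empty => simp
  | cons b s ih =>
    have hrest : 0 ≤ (s.map r).prod :=
      Multiset.prod_nonneg (Multiset.forall_mem_map_iff.mpr fun y _ => hr y)
    rw [Multiset.map_cons, Multiset.map_cons, Multiset.prod_cons, Multiset.prod_cons]
    by_cases hb : b = x
    · subst hb
      have hle : r b ≤ r b * max 1 (r b) := le_mul_of_one_le_right (hr b) (le_max_left _ _)
      calc r b * (s.map r).prod
          ≤ r b * max 1 (r b) * (r b ^ s.count b * (s.map fun y => max 1 (r y)).prod) :=
            mul_le_mul hle ih hrest ((hr b).trans hle)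
        _ = _ := by rw [Multiset.count_cons_self]; ring
    · rw [Multiset.count_cons_of_ne (Ne.symm hb), mul_left_comm]
      exact mul_le_mul (le_max_right _ _) ih hrest (le_max_of_le_left zero_le_one)

namespace Polynomial

section Field

variable {K : Type*} [Field K]

theorem roots_eq_replicate_add_roots_divByMonic {p : K[X]} (hp : p ≠ 0) (a : K) :
    p.roots = Multiset.replicate (p.rootMultiplicity a) a +
      (p /ₘ (X - C a) ^ p.rootMultiplicity a).roots := by
  have hfac := p.pow_mul_divByMonic_rootMultiplicity_eq a
  conv_lhs => rw [← hfac]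
  rw [roots_mul (by rw [hfac]; exact hp), roots_pow, roots_X_sub_C, Multiset.nsmul_singleton]

theorem leadingCoeff_divByMonic_pow_rootMultiplicity (p : K[X]) (a : K) :
    (p /ₘ (X - C a) ^ p.rootMultiplicity a).leadingCoeff = p.leadingCoeff := by
  conv_rhs => rw [← p.pow_mul_divByMonic_rootMultiplicity_eq a]
  rw [leadingCoeff_mul, ((monic_X_sub_C a).pow _).leadingCoeff, one_mul]

theorem eval_iterate_derivative_rootMultiplicity_div_factorial [CharZero K] (p : K[X]) (a : K) :
    (derivative^[p.rootMultiplicity a] p).eval a / (p.rootMultiplicity a).factorial =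
      (p /ₘ (X - C a) ^ p.rootMultiplicity a).eval a := by
  rw [eval_iterate_derivative_rootMultiplicity, nsmul_eq_mul]
  exact mul_div_cancel_left₀ _ (Nat.cast_ne_zero.mpr (Nat.factorial_ne_zero _))

theorem roots_comp_X_add_C (p : K[X]) (a : K) :
    (p.comp (X + C a)).roots = p.roots.map (· - a) := by
  simpa using p.roots_comp_C_mul_X_add_C 1 a isUnit_one

theorem leadingCoeff_comp_X_add_C (p : K[X]) (a : K) :
    (p.comp (X + C a)).leadingCoeff = p.leadingCoeff := by
  rw [leadingCoeff_comp (by rw [natDegree_X_add_C]; exact one_ne_zero), leadingCoeff_X_add_C,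
    one_pow, mul_one]

end Field

theorem norm_eval_eq_mul_prod_roots (p : ℂ[X]) (x : ℂ) :
    ‖p.eval x‖ = ‖p.leadingCoeff‖ * (p.roots.map fun w => ‖x - w‖).prod := by
  rw [(IsAlgClosed.splits p).eval_eq_prod_roots, norm_mul]
  congr 1
  rw [← normHom_apply, map_multiset_prod, Multiset.map_map]
  rfl

end Polynomial

theorem Mea_comp_X_add_C (p : ℂ[X]) (a : ℂ) :
    Mea (p.comp (X + C a)) = ‖p.leadingCoeff‖ * (p.roots.map fun w => max 1 ‖w - a‖).prod := by
  rw [Mea, leadingCoeff_comp_X_add_C, roots_comp_X_add_C, Multiset.map_map]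
  rfl

theorem sep_pow_mul_mea_ge_general (f : Polynomial ℂ) (hf : f ≠ 0) (z z' : ℂ)
    (hne : z' ≠ z) :
    ‖((derivative^[f.rootMultiplicity z'] f).eval z') /
        (Nat.factorial (f.rootMultiplicity z') : ℂ)‖ ≤
      ‖z - z'‖ ^ (f.rootMultiplicity z) * Mea (f.comp (X + C z')) := by
  set g := f /ₘ (X - C z') ^ f.rootMultiplicity z'
  have hroots := roots_eq_replicate_add_roots_divByMonic hf z'
  have hcount : g.roots.count z = f.rootMultiplicity z := by
    rw [← count_roots, hroots, Multiset.count_add, Multiset.count_replicate, if_neg hne, zero_add]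
  rw [eval_iterate_derivative_rootMultiplicity_div_factorial, norm_eval_eq_mul_prod_roots,
    leadingCoeff_divByMonic_pow_rootMultiplicity, Mea_comp_X_add_C, hroots]
  simp only [Multiset.map_add, Multiset.map_replicate, sub_self, norm_zero, max_eq_left zero_le_one,
    Multiset.prod_add, Multiset.prod_replicate, one_pow, one_mul]
  calc ‖f.leadingCoeff‖ * (g.roots.map fun w => ‖z' - w‖).prod
      = ‖f.leadingCoeff‖ * (g.roots.map fun w => ‖w - z'‖).prod := by simp only [norm_sub_rev z']
    _ ≤ ‖f.leadingCoeff‖ * (‖z - z'‖ ^ g.roots.count z *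
          (g.roots.map fun w => max 1 ‖w - z'‖).prod) := by
        gcongr
        exact Multiset.prod_map_le_pow_count_mul_prod_map_max_one _ z fun _ => norm_nonneg _
    _ = _ := by rw [hcount]; ring

/-- Let z be a root of f of multiplicity μ(z) and z' ≠ z a root of f minimizing
the distance to z.  Then sep(z,f)^{μ(z)} · Mea(f(X+z')) ≥ |f^{[μ(z')]}(z')|,
where f^{[k]} = f^{(k)}/k! and sep(z,f) = |z - z'|. -/
theorem sep_pow_mul_mea_ge (f : Polynomial ℂ) (hf : f ≠ 0) (z z' : ℂ)
    (hz : f.IsRoot z) (hz' : f.IsRoot z') (hne : z' ≠ z)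
    (hnear : ∀ y ∈ f.roots, y ≠ z → ‖z - z'‖ ≤ ‖z - y‖) :
    ‖((derivative^[f.rootMultiplicity z'] f).eval z') /
        (Nat.factorial (f.rootMultiplicity z') : ℂ)‖ ≤
      ‖z - z'‖ ^ (f.rootMultiplicity z) * Mea (f.comp (X + C z')) :=
  sep_pow_mul_mea_ge_general f hf z z' hne
end

section
/- Let f ∈ ℂ[X] have degree n and distinct roots z₁,…,z_m with multiplicities μ₁,…,μ_m. Then |lc(f)|^{n-2} · ∏_{i} |f^{[μᵢ]}(zᵢ)|^{μᵢ} = |lc(f)|^{2n-2} · ∏_{i ≠ j} |zᵢ − z_j|^{μᵢ μ_j}. -/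
/-! Writing `f = (X - zᵢ)^μᵢ · gᵢ`, the Hasse derivative `f^{[μᵢ]}(zᵢ)` is `gᵢ(zᵢ) = c ∏_{j ≠ i} (zᵢ - zⱼ)^μⱼ`
(read off the Taylor expansion at `zᵢ`). Raising to the `μᵢ` and multiplying over `i` gives
`|c|^n ∏_{i ≠ j} |zᵢ - zⱼ|^{μᵢ μⱼ}`, and `|c|^{n-2} |c|^n = |c|^{2n-2}`. -/

open Polynomial

theorem Finset.prod_offDiag_eq_prod_prod_erase {α M : Type*} [DecidableEq α] [CommMonoid M]
    (s : Finset α) (F : α × α → M) :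
    ∏ p ∈ s.offDiag, F p = ∏ i ∈ s, ∏ j ∈ s.erase i, F (i, j) := by
  rw [Finset.prod_finset_product _ s fun i => s.erase i]
  intro p
  simp [Finset.mem_offDiag, ne_comm, and_comm]

namespace Polynomial

variable {R : Type*}

theorem eval_hasseDeriv_X_sub_C_pow_mul [CommRing R] (k : ℕ) (a : R) (g : R[X]) :
    (hasseDeriv k ((X - C a) ^ k * g)).eval a = g.eval a := by
  rw [← taylor_coeff, taylor_mul, taylor_pow, taylor_apply, sub_comp, X_comp, C_comp,
    add_sub_cancel_right, coeff_X_pow_mul', if_pos le_rfl, Nat.sub_self, taylor_coeff_zero]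

theorem eval_iterate_derivative_div_factorial [Field R] [CharZero R] (k : ℕ) (a : R)
    (f : R[X]) :
    (derivative^[k] f).eval a / (k.factorial : R) = (hasseDeriv k f).eval a := by
  rw [← factorial_smul_hasseDeriv, LinearMap.smul_apply, eval_smul, nsmul_eq_mul,
    mul_div_cancel_left₀ _ (Nat.cast_ne_zero.mpr k.factorial_ne_zero)]

theorem eval_hasseDeriv_C_mul_prod_X_sub_C_pow {ι : Type*} [CommRing R] [DecidableEq ι]
    {s : Finset ι} {i : ι} (hi : i ∈ s) (c : R) (z : ι → R) (μ : ι → ℕ) :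
    (hasseDeriv (μ i) (C c * ∏ j ∈ s, (X - C (z j)) ^ μ j)).eval (z i) =
      c * ∏ j ∈ s.erase i, (z i - z j) ^ μ j := by
  rw [← Finset.mul_prod_erase s _ hi, mul_left_comm, eval_hasseDeriv_X_sub_C_pow_mul]
  simp [eval_prod]

end Polynomial

theorem gdisc_two_expressions_general (m : ℕ) (z : Fin m → ℂ)
    (μ : Fin m → ℕ) (c : ℂ) (hc : c ≠ 0)
    (f : Polynomial ℂ) (hfz : f = C c * ∏ i, (X - C (z i)) ^ μ i)
    (n : ℕ) (hn : n = ∑ i, μ i) :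
    ‖c‖ ^ ((n : ℤ) - 2) *
        ∏ i, ‖(derivative^[μ i] f).eval (z i) / (Nat.factorial (μ i) : ℂ)‖ ^ μ i =
      ‖c‖ ^ (2 * (n : ℤ) - 2) *
        ∏ p ∈ Finset.univ.offDiag, ‖z p.1 - z p.2‖ ^ (μ p.1 * μ p.2) := by
  have hfactor (i : Fin m) :
      ‖(derivative^[μ i] f).eval (z i) / (Nat.factorial (μ i) : ℂ)‖ ^ μ i =
        ‖c‖ ^ μ i * ∏ j ∈ Finset.univ.erase i, ‖z i - z j‖ ^ (μ i * μ j) := by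
    rw [eval_iterate_derivative_div_factorial, hfz,
      eval_hasseDeriv_C_mul_prod_X_sub_C_pow (Finset.mem_univ i), norm_mul, mul_pow, norm_prod,
      ← Finset.prod_pow]
    simp only [norm_pow, ← pow_mul, mul_comm (μ _) (μ i)]
  have hpow : ‖c‖ ^ ((n : ℤ) - 2) * ‖c‖ ^ n = ‖c‖ ^ (2 * (n : ℤ) - 2) := by
    rw [← zpow_natCast, ← zpow_add₀ (norm_ne_zero_iff.mpr hc)]
    ring_nf
  rw [Finset.prod_congr rfl fun i _ => hfactor i, Finset.prod_mul_distrib,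
    Finset.prod_pow_eq_pow_sum, ← hn, ← mul_assoc, hpow,
    Finset.prod_offDiag_eq_prod_prod_erase]

/-- For f = lc·∏ᵢ (X − zᵢ)^{μᵢ} of degree n = ∑ μᵢ with the zᵢ distinct:
|lc|^{n-2} · ∏ᵢ |f^{[μᵢ]}(zᵢ)|^{μᵢ} = |lc|^{2n-2} · ∏_{i≠j} |zᵢ − z_j|^{μᵢμ_j}. -/
theorem gdisc_two_expressions (m : ℕ) (z : Fin m → ℂ) (hzinj : Function.Injective z)
    (μ : Fin m → ℕ) (hμ : ∀ i, 1 ≤ μ i) (c : ℂ) (hc : c ≠ 0)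
    (f : Polynomial ℂ) (hfz : f = C c * ∏ i, (X - C (z i)) ^ μ i)
    (n : ℕ) (hn : n = ∑ i, μ i) (hn1 : 1 ≤ n) :
    ‖c‖ ^ ((n : ℤ) - 2) *
        ∏ i, ‖(derivative^[μ i] f).eval (z i) / (Nat.factorial (μ i) : ℂ)‖ ^ μ i =
      ‖c‖ ^ (2 * (n : ℤ) - 2) *
        ∏ p ∈ Finset.univ.offDiag, ‖z p.1 - z p.2‖ ^ (μ p.1 * μ p.2) :=
  gdisc_two_expressions_general m z μ c hc f hfz n hn
end

section
/- Let f be a polynomial with complex coefficients having only simple roots at the points of a finite set V, i.e. f = lc(f)·∏_{z ∈ V} (X − z). Then ∏_{z ∈ V} sep(z,f) ≤ 2^{|V|} · (∏_{z ∈ V} max(1,|z|))^{7}, where sep(z,f) is the minimum distance from z to another root. -/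
/-!
Let `a` be a root minimising `max 1 ‖a‖` and `b` any other root. Bounding `sep z` by the distance
to `a` for `z ≠ a`, and `sep a` by the distance to `b`, and using
`‖z - y‖ ≤ 2 max(1,‖z‖) max(1,‖y‖)`, gives `∏ sep ≤ 2^|V| · P · (max(1,‖a‖)^|V| · max(1,‖b‖))`
with `P = ∏ max(1,‖z‖)`; by the choice of `a` the last factor is at most `P²`, so the exponent
`3 ≤ 7` already suffices.
-/

open Finset

theorem norm_sub_le_two_mul_max_one_mul_max_one {E : Type*} [SeminormedAddGroup E] (x y : E) :
    ‖x - y‖ ≤ 2 * max 1 ‖x‖ * max 1 ‖y‖ := by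
  have hx : ‖x‖ ≤ max 1 ‖x‖ := le_max_right _ _
  have hy : ‖y‖ ≤ max 1 ‖y‖ := le_max_right _ _
  nlinarith [norm_sub_le x y, le_max_left 1 ‖x‖, le_max_left 1 ‖y‖]

theorem Finset.exists_ne_prod_comp_le_sq {ι R : Type*} [CommSemiring R] [LinearOrder R]
    [IsOrderedRing R] {s : Finset ι} (hs : 1 < #s) {f : ι → R} (hf : ∀ i ∈ s, 1 ≤ f i) :
    ∃ w : ι → ι, (∀ i ∈ s, w i ∈ s ∧ w i ≠ i) ∧ ∏ i ∈ s, f (w i) ≤ (∏ i ∈ s, f i) ^ 2 := by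
  classical
  have hf₀ : ∀ i ∈ s, 0 ≤ f i := fun i hi => zero_le_one.trans (hf i hi)
  obtain ⟨a, ha, ha_min⟩ := s.exists_min_image f (card_pos.mp (by omega))
  obtain ⟨b, hb, hba⟩ := s.exists_mem_ne hs a
  refine ⟨fun i => if i = a then b else a, fun i hi => ?_, ?_⟩
  · dsimp only
    split_ifs with hia
    · exact ⟨hb, hia ▸ hba⟩
    · exact ⟨ha, Ne.symm hia⟩
  have hpow : f a ^ #s ≤ ∏ i ∈ s, f i := by
    simpa using prod_le_prod (fun _ _ => hf₀ a ha) ha_min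
  have hsingle : f b ≤ ∏ i ∈ s, f i := by
    simpa using prod_le_prod_of_subset_of_one_le (singleton_subset_iff.mpr hb)
      (by simpa using hf₀ b hb) (fun i hi _ => hf i hi)
  calc ∏ i ∈ s, f (if i = a then b else a)
      ≤ ∏ i ∈ s, f a * (if i = a then f b else 1) := by
        refine prod_le_prod (fun i _ => by split_ifs <;> exact hf₀ _ ‹_›) fun i _ => ?_
        split_ifs
        · exact le_mul_of_one_le_left (hf₀ b hb) (hf a ha)
        · rw [mul_one]
    _ = f a ^ #s * f b := by rw [prod_mul_distrib, prod_const, prod_ite_eq', if_pos ha]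
    _ ≤ (∏ i ∈ s, f i) * ∏ i ∈ s, f i :=
        mul_le_mul hpow hsingle (hf₀ b hb) (prod_nonneg hf₀)
    _ = (∏ i ∈ s, f i) ^ 2 := (sq _).symm

/-- If f is square-free with root set V (|V| ≥ 2) and sep(z) is the minimum
distance from z to another root, then
∏_{z ∈ V} sep(z) ≤ 2^{|V|} · (∏_{z ∈ V} max(1,|z|))^7. -/
theorem prod_sep_le (V : Finset ℂ) (hV : 2 ≤ V.card)
    (sep : ℂ → ℝ)
    (hsep : ∀ z ∈ V,
      IsLeast {d : ℝ | ∃ y ∈ V, y ≠ z ∧ d = ‖z - y‖} (sep z)) :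
    ∏ z ∈ V, sep z ≤ 2 ^ V.card * (∏ z ∈ V, max 1 ‖z‖) ^ 7 := by
  set P := ∏ z ∈ V, max 1 ‖z‖
  have hP : 1 ≤ P := one_le_prod fun _ _ => le_max_left _ _
  obtain ⟨w, hw, hwP⟩ :=
    V.exists_ne_prod_comp_le_sq hV (f := fun z => max 1 ‖z‖) fun _ _ => le_max_left _ _
  have hsep_nonneg : ∀ z ∈ V, 0 ≤ sep z := fun z hz => by
    obtain ⟨y, -, -, hy⟩ := (hsep z hz).1
    exact hy ▸ norm_nonneg _
  calc ∏ z ∈ V, sep z ≤ ∏ z ∈ V, 2 * max 1 ‖z‖ * max 1 ‖w z‖ :=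
        prod_le_prod hsep_nonneg fun z hz =>
          ((hsep z hz).2 ⟨w z, (hw z hz).1, (hw z hz).2, rfl⟩).trans
            (norm_sub_le_two_mul_max_one_mul_max_one z (w z))
    _ = 2 ^ #V * P * ∏ z ∈ V, max 1 ‖w z‖ := by rw [prod_mul_distrib, prod_mul_distrib, prod_const]
    _ ≤ 2 ^ #V * P * P ^ 2 := by gcongr
    _ = 2 ^ #V * P ^ 3 := by ring
    _ ≤ 2 ^ #V * P ^ 7 := by gcongr; norm_num
end

section
/- Let f ∈ ℤ[X] be nonzero and let g₁,…,g_m ∈ ℤ[X] be such that for every complex root z of f, at least one gᵢ does not vanish at z. For each root z, let i(z) be the smallest index with g_{i(z)}(z) ≠ 0, and let μ(z) be the multiplicity of z as a root of f. Then ∏_{z root of f} |g_{i(z)}(z)|^{μ(z)} ≥ |lc(f)|^{−n₂}, where n₂ = max degree of the gᵢ. In particular this product is nonzero. -/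
/-!
Put `G_U = g₀ + U g₁ + ⋯ + U^(m-1) g_(m-1) ∈ ℤ[U][X]` and `R(U) = Res_X(f, G_U) ∈ ℤ[U]`. Over `ℂ[U]`,
`R(U) = lc(f)^n₂ ∏_z G_U(z)^μ(z)`, and the lowest nonzero coefficient of the factor `G_U(z)` is
`g_(i(z))(z)`. Trailing coefficients are multiplicative, so the trailing coefficient of `R`, an
integer, equals `lc(f)^n₂ ∏_z g_(i(z))(z)^μ(z)`; it is nonzero, hence of absolute value at least 1.
-/

open Polynomial

namespace Polynomial

variable {R : Type*} {m : ℕ}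

theorem trailingCoeff_eq_coeff_of_forall_lt_eq_zero [Semiring R] {p : R[X]} {k : ℕ}
    (hk : p.coeff k ≠ 0) (h : ∀ j < k, p.coeff j = 0) : p.trailingCoeff = p.coeff k := by
  have hp : p ≠ 0 := fun hp => hk (by rw [hp, coeff_zero])
  rw [trailingCoeff, le_antisymm (natTrailingDegree_le_of_ne_zero hk) (le_natTrailingDegree hp h)]

theorem trailingCoeff_C [Semiring R] (a : R) : (C a).trailingCoeff = a := by
  rw [trailingCoeff, natTrailingDegree_C, coeff_C_zero]

theorem trailingCoeff_map_of_injective [Semiring R] {S : Type*} [Semiring S] {φ : R →+* S}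
    (hφ : Function.Injective φ) (p : R[X]) : (p.map φ).trailingCoeff = φ p.trailingCoeff := by
  rcases eq_or_ne p 0 with rfl | hp
  · simp
  rw [trailingCoeff_eq_coeff_of_forall_lt_eq_zero (k := p.natTrailingDegree), coeff_map]
  · rfl
  · rwa [coeff_map, ← trailingCoeff, map_ne_zero_iff φ hφ, trailingCoeff_nonzero_iff_nonzero]
  · intro j hj
    rw [coeff_map, coeff_eq_zero_of_lt_natTrailingDegree hj, map_zero]

theorem trailingCoeff_multiset_prod [CommSemiring R] [NoZeroDivisors R] (s : Multiset R[X]) :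
    s.prod.trailingCoeff = (s.map trailingCoeff).prod := by
  induction s using Multiset.induction_on with
  | empty => simp [trailingCoeff]
  | cons p s ih =>
    rw [Multiset.prod_cons, trailingCoeff_mul, ih, Multiset.map_cons, Multiset.prod_cons]

/-- `g₀ + U g₁ + ⋯ + U^(m-1) g_(m-1)` as a polynomial in `X` over `R[U]`; the inner variable of
`R[X][X]` plays the role of `U`. -/
noncomputable def uCombination [Semiring R] (g : Fin m → R[X]) : R[X][X] :=
  ∑ i : Fin m, C (X ^ (i : ℕ)) * (g i).map C

theorem natDegree_uCombination_le [Semiring R] {g : Fin m → R[X]} {n : ℕ}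
    (hg : ∀ i, (g i).natDegree ≤ n) : (uCombination g).natDegree ≤ n :=
  natDegree_sum_le_of_forall_le _ _ fun i _ =>
    (natDegree_C_mul_le _ _).trans (natDegree_map_le.trans (hg i))

theorem map_uCombination [Semiring R] {S : Type*} [Semiring S] (φ : R →+* S) (g : Fin m → R[X]) :
    (uCombination g).map (mapRingHom φ) = uCombination fun i => (g i).map φ := by
  simp [uCombination, Polynomial.map_sum, Polynomial.map_map, mapRingHom_comp_C]

theorem eval_C_uCombination [CommSemiring R] (g : Fin m → R[X]) (z : R) :
    (uCombination g).eval (C z) = ∑ i : Fin m, C ((g i).eval z) * X ^ (i : ℕ) := by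
  simp only [uCombination, eval_finsetSum, eval_mul, eval_C, eval_map, eval₂_at_apply, mul_comm]

theorem coeff_eval_C_uCombination [CommSemiring R] (g : Fin m → R[X]) (z : R) (k : Fin m) :
    ((uCombination g).eval (C z)).coeff k = (g k).eval z := by
  simp [eval_C_uCombination, finsetSum_coeff, Fin.val_inj]

theorem trailingCoeff_eval_C_uCombination [CommSemiring R] {g : Fin m → R[X]} {z : R} {k : Fin m}
    (hk : (g k).eval z ≠ 0) (h : ∀ j < k, (g j).eval z = 0) :
    ((uCombination g).eval (C z)).trailingCoeff = (g k).eval z := by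
  rw [← coeff_eval_C_uCombination g z k]
  refine trailingCoeff_eq_coeff_of_forall_lt_eq_zero (by rwa [coeff_eval_C_uCombination]) ?_
  intro j hj
  exact (coeff_eval_C_uCombination g z ⟨j, hj.trans k.isLt⟩).trans (h _ hj)

theorem map_trailingCoeff_resultant_uCombination {A K : Type*} [CommRing A] [Field K]
    {φ : A →+* K} (hφ : Function.Injective φ) {f : A[X]} (hf : (f.map φ).Splits)
    {g : Fin m → A[X]} {n : ℕ} (hg : ∀ i, (g i).natDegree ≤ n) {ι : K → Fin m}
    (hι : ∀ z, (f.map φ).IsRoot z →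
      ((g (ι z)).map φ).eval z ≠ 0 ∧ ∀ j < ι z, ((g j).map φ).eval z = 0) :
    φ (resultant (f.map C) (uCombination g) f.natDegree n).trailingCoeff =
      φ f.leadingCoeff ^ n * ((f.map φ).roots.map fun z => ((g (ι z)).map φ).eval z).prod := by
  have hmap : (f.map C).map (mapRingHom φ) = (f.map φ).map C := by
    simp only [Polynomial.map_map, mapRingHom_comp_C]
  have hdeg : ((f.map φ).map C).natDegree = f.natDegree := by
    rw [natDegree_map_eq_of_injective C_injective, natDegree_map_eq_of_injective hφ]
  have hres : (resultant (f.map C) (uCombination g) f.natDegree n).map φ =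
      resultant ((f.map φ).map C) (uCombination fun i => (g i).map φ) f.natDegree n := by
    have := resultant_map_map (f.map C) (uCombination g) f.natDegree n (mapRingHom φ)
    rw [hmap, map_uCombination] at this
    exact this.symm
  have hGdeg : (uCombination fun i => (g i).map φ).natDegree ≤ n :=
    natDegree_uCombination_le fun i => natDegree_map_le.trans (hg i)
  rw [← trailingCoeff_map_of_injective hφ, hres, ← hdeg,
    resultant_eq_prod_eval _ _ _ hGdeg (hf.map C), hf.roots_map_of_injective C_injective,
    trailingCoeff_mul, trailingCoeff_multiset_prod, leadingCoeff_map_of_injective C_injective,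
    leadingCoeff_map_of_injective hφ, ← C_pow, trailingCoeff_C, Multiset.map_map, Multiset.map_map]
  congr 2
  refine Multiset.map_congr rfl fun z hz => ?_
  obtain ⟨hz, hlt⟩ := hι z (isRoot_of_mem_roots hz)
  exact trailingCoeff_eval_C_uCombination hz hlt

end Polynomial

theorem prod_abs_eval_ge_general (f : Polynomial ℤ) (hf : f ≠ 0)
    (m : ℕ) (g : Fin m → Polynomial ℤ)
    (n₂ : ℕ) (hgd : ∀ i, (g i).natDegree ≤ n₂)
    (ι : ℂ → Fin m)
    (hι : ∀ z : ℂ, (f.map (Int.castRingHom ℂ)).IsRoot z →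
      ((g (ι z)).map (Int.castRingHom ℂ)).eval z ≠ 0 ∧
        ∀ j < ι z, ((g j).map (Int.castRingHom ℂ)).eval z = 0) :
    ((f.leadingCoeff.natAbs : ℝ)) ^ (-(n₂ : ℤ)) ≤
      ∏ z ∈ (f.map (Int.castRingHom ℂ)).roots.toFinset,
        ‖((g (ι z)).map (Int.castRingHom ℂ)).eval z‖ ^
          ((f.map (Int.castRingHom ℂ)).rootMultiplicity z) := by
  set P := ∏ z ∈ (f.map (Int.castRingHom ℂ)).roots.toFinset,
    ((g (ι z)).map (Int.castRingHom ℂ)).eval z ^ ((f.map (Int.castRingHom ℂ)).rootMultiplicity z)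
  obtain ⟨a, ha⟩ : ∃ a : ℤ, (a : ℂ) = (f.leadingCoeff : ℂ) ^ n₂ * P := by
    refine ⟨_, (map_trailingCoeff_resultant_uCombination Int.cast_injective
      (IsAlgClosed.splits _) hgd hι).trans ?_⟩
    rw [Finset.prod_multiset_map_count]
    simp_rw [count_roots]
    rfl
  have hlc : f.leadingCoeff ≠ 0 := leadingCoeff_ne_zero.2 hf
  have hP : P ≠ 0 := Finset.prod_ne_zero_iff.2 fun z hz =>
    pow_ne_zero _ (hι z (isRoot_of_mem_roots (Multiset.mem_toFinset.1 hz))).1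
  have ha0 : a ≠ 0 := by
    rintro rfl
    exact mul_ne_zero (pow_ne_zero _ (Int.cast_ne_zero.2 hlc)) hP (by rw [← ha, Int.cast_zero])
  have h_one_le : 1 ≤ (f.leadingCoeff.natAbs : ℝ) ^ n₂ * ‖P‖ := by
    calc (1 : ℝ) ≤ ‖(a : ℂ)‖ := by rw [Complex.norm_intCast]; exact_mod_cast Int.one_le_abs ha0
      _ = _ := by rw [ha, norm_mul, norm_pow, Complex.norm_intCast, Nat.cast_natAbs, Int.cast_abs]
  rw [zpow_neg, zpow_natCast, inv_le_iff_one_le_mul₀ (by positivity)]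
  simpa only [P, norm_prod, norm_pow, mul_comm] using h_one_le

/-- Let f ∈ ℤ[X] be nonzero and g₁,…,g_m ∈ ℤ[X] of degree ≤ n₂ be such that at
every complex root z of f some gᵢ does not vanish; let i(z) be the smallest such
index and μ(z) the multiplicity of z.  Then
∏_{z root of f} |g_{i(z)}(z)|^{μ(z)} ≥ |lc(f)|^{−n₂} (in particular it is nonzero). -/
theorem prod_abs_eval_ge (f : Polynomial ℤ) (hf : f ≠ 0)
    (m : ℕ) (hm : 1 ≤ m) (g : Fin m → Polynomial ℤ)
    (n₂ : ℕ) (hgd : ∀ i, (g i).natDegree ≤ n₂)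
    (ι : ℂ → Fin m)
    (hι : ∀ z : ℂ, (f.map (Int.castRingHom ℂ)).IsRoot z →
      ((g (ι z)).map (Int.castRingHom ℂ)).eval z ≠ 0 ∧
        ∀ j < ι z, ((g j).map (Int.castRingHom ℂ)).eval z = 0) :
    ((f.leadingCoeff.natAbs : ℝ)) ^ (-(n₂ : ℤ)) ≤
      ∏ z ∈ (f.map (Int.castRingHom ℂ)).roots.toFinset,
        ‖((g (ι z)).map (Int.castRingHom ℂ)).eval z‖ ^
          ((f.map (Int.castRingHom ℂ)).rootMultiplicity z) :=
  prod_abs_eval_ge_general f hf m g n₂ hgd ι hι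
end

section
/- Let K be a field and let f, g ∈ K[X] be nonzero polynomials of degrees p and q, respectively. Let φ : K_{<q}[X] × K_{<p}[X] → K_{<p+q}[X] be the linear map sending (U,V) to Uf + Vg, where K_{<n}[X] denotes polynomials of degree < n. Then the image of φ equals the set of multiples of gcd(f,g) of degree < p+q, and the rank of φ is p + q − deg(gcd(f,g)). -/
open Polynomial

private lemma degree_mul_lt_of_lt {K : Type*} [Field K] {U f : Polynomial K} {a b : ℕ}
    (hU : U.degree < (a : WithBot ℕ)) (hf : f.degree = (b : WithBot ℕ)) :
    (U * f).degree < ((a + b : ℕ) : WithBot ℕ) := by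
  rcases eq_or_ne U 0 with rfl | h
  · rw [zero_mul, Polynomial.degree_zero]
    exact WithBot.bot_lt_coe _
  · rw [degree_mul, hf]
    push_cast
    exact WithBot.add_lt_add_right (by simp) hU

private lemma finrank_degreeLT (K : Type*) [Field K] (n : ℕ) :
    Module.finrank K (Polynomial.degreeLT K n) = n := by
  rw [LinearEquiv.finrank_eq (Polynomial.degreeLTEquiv K n)]
  simp

/-- Let f, g ∈ K[X] be nonzero of degrees p, q ≥ 1, and let
φ : K_{<q}[X] × K_{<p}[X] → K[X] be the linear map (U,V) ↦ Uf + Vg.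
Then the image of φ is the set of multiples of gcd(f,g) of degree < p+q,
and the rank of φ is p + q − deg(gcd(f,g)). -/
theorem image_and_rank_of_bezout_map (K : Type*) [Field K] [DecidableEq (Polynomial K)]
    (f g : Polynomial K) (p q : ℕ)
    (hp : f.natDegree = p) (hq : g.natDegree = q) (hp1 : 1 ≤ p) (hq1 : 1 ≤ q)
    (hf : f ≠ 0) (hg : g ≠ 0)
    (φ : (Polynomial.degreeLT K q × Polynomial.degreeLT K p) →ₗ[K] Polynomial K)
    (hφ : ∀ UV : Polynomial.degreeLT K q × Polynomial.degreeLT K p,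
      φ UV = (UV.1 : Polynomial K) * f + (UV.2 : Polynomial K) * g) :
    (∀ h : Polynomial K, h ∈ LinearMap.range φ ↔
        (EuclideanDomain.gcd f g ∣ h ∧ h.degree < (p + q : ℕ))) ∧
      Module.finrank K (LinearMap.range φ) =
        p + q - (EuclideanDomain.gcd f g).natDegree := by
  set d := EuclideanDomain.gcd f g with hd
  have hd0 : d ≠ 0 := by
    rw [hd, Ne, EuclideanDomain.gcd_eq_zero_iff]
    tauto
  have hdf : d ∣ f := EuclideanDomain.gcd_dvd_left f g
  have hdg : d ∣ g := EuclideanDomain.gcd_dvd_right f g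
  set δ := d.natDegree with hδ
  have hδp : δ ≤ p := hp ▸ Polynomial.natDegree_le_of_dvd hdf hf
  have hδpq : δ ≤ p + q := hδp.trans (Nat.le_add_right _ _)
  have hdd : d.degree = (δ : WithBot ℕ) := Polynomial.degree_eq_natDegree hd0
  have hfd : f.degree = (p : WithBot ℕ) := hp ▸ Polynomial.degree_eq_natDegree hf
  have hgd : g.degree = (q : WithBot ℕ) := hq ▸ Polynomial.degree_eq_natDegree hg
  -- the image characterization
  have key : ∀ h : Polynomial K, h ∈ LinearMap.range φ ↔
      (d ∣ h ∧ h.degree < ((p + q : ℕ) : WithBot ℕ)) := by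
    intro h
    constructor
    · rintro ⟨⟨U, V⟩, rfl⟩
      rw [hφ]
      refine ⟨dvd_add (hdf.mul_left _) (hdg.mul_left _), ?_⟩
      have h1 : ((U : Polynomial K) * f).degree < ((q + p : ℕ) : WithBot ℕ) :=
        degree_mul_lt_of_lt (Polynomial.mem_degreeLT.mp U.2) hfd
      have h2 : ((V : Polynomial K) * g).degree < ((p + q : ℕ) : WithBot ℕ) :=
        degree_mul_lt_of_lt (Polynomial.mem_degreeLT.mp V.2) hgd
      rw [Nat.add_comm q p] at h1
      exact lt_of_le_of_lt (Polynomial.degree_add_le _ _) (max_lt h1 h2)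
    · rintro ⟨⟨k, rfl⟩, hdeg⟩
      -- use Bézout to get some representation, then reduce
      have hbez : d = f * EuclideanDomain.gcdA f g + g * EuclideanDomain.gcdB f g :=
        EuclideanDomain.gcd_eq_gcd_ab f g
      set W : Polynomial K := k * EuclideanDomain.gcdA f g with hW
      set Z : Polynomial K := k * EuclideanDomain.gcdB f g with hZ
      have hWZ : W * f + Z * g = d * k := by
        rw [hW, hZ]
        conv_rhs => rw [hbez]
        ring
      set g' : Polynomial K := g / d with hg'
      have hg'1 : d * g' = g := EuclideanDomain.mul_div_cancel' hd0 hdg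
      have hg'0 : g' ≠ 0 := by
        intro h0
        rw [h0, mul_zero] at hg'1
        exact hg (hg'1.symm)
      set f' : Polynomial K := f / d with hf'
      have hf'1 : d * f' = f := EuclideanDomain.mul_div_cancel' hd0 hdf
      set U : Polynomial K := W % g' with hU
      set t : Polynomial K := W / g' with ht
      have hdm : g' * t + U = W := EuclideanDomain.div_add_mod W g'
      have hgf : g' * f = f' * g := by rw [← hg'1, ← hf'1]; ring
      have hUV : U * f + (Z + t * f') * g = d * k := by
        linear_combination hWZ + f * hdm - t * hgf
      have hUdeg : U.degree < (q : WithBot ℕ) := by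
        have h1 : U.degree < g'.degree := EuclideanDomain.mod_lt W hg'0
        have h2 : g'.degree ≤ g.degree := by
          rw [← hg'1, degree_mul, hdd]
          exact le_add_of_nonneg_left (by simp)
        exact lt_of_lt_of_le h1 (h2.trans_eq hgd)
      have hVdeg : (Z + t * f').degree < (p : WithBot ℕ) := by
        set V : Polynomial K := Z + t * f' with hV
        rcases eq_or_ne V 0 with h0 | h0
        · rw [h0, Polynomial.degree_zero]; exact WithBot.bot_lt_coe _
        have hVg : (V * g).degree < ((p + q : ℕ) : WithBot ℕ) := by
          have : V * g = d * k - U * f := by rw [← hUV]; ring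
          rw [this]
          refine lt_of_le_of_lt (Polynomial.degree_sub_le _ _) (max_lt hdeg ?_)
          have := degree_mul_lt_of_lt hUdeg hfd
          rwa [Nat.add_comm q p] at this
        rw [degree_mul, hgd] at hVg
        have : (p : WithBot ℕ) + (q : WithBot ℕ) = ((p + q : ℕ) : WithBot ℕ) := by push_cast; rfl
        rw [← this] at hVg
        exact (WithBot.add_lt_add_iff_right (by simp)).mp hVg
      exact ⟨(⟨U, Polynomial.mem_degreeLT.mpr hUdeg⟩,
            ⟨Z + t * f', Polynomial.mem_degreeLT.mpr hVdeg⟩), by rw [hφ]; exact hUV⟩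
  refine ⟨key, ?_⟩
  -- the rank computation via multiplication by d
  set ψ : Polynomial.degreeLT K (p + q - δ) →ₗ[K] Polynomial K :=
    (LinearMap.mulLeft K d).comp (Polynomial.degreeLT K (p + q - δ)).subtype with hψ
  have hψ_apply : ∀ w : Polynomial.degreeLT K (p + q - δ), ψ w = d * (w : Polynomial K) := by
    intro w; rfl
  have hrange : LinearMap.range ψ = LinearMap.range φ := by
    ext h
    rw [key h]
    constructor
    · rintro ⟨w, rfl⟩
      rw [hψ_apply]
      refine ⟨Dvd.intro _ rfl, ?_⟩
      have h1 : (d * (w : Polynomial K)).degree = ((w : Polynomial K) * d).degree := by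
        rw [mul_comm]
      rw [h1]
      have := degree_mul_lt_of_lt (Polynomial.mem_degreeLT.mp w.2) hdd
      rwa [Nat.sub_add_cancel hδpq] at this
    · rintro ⟨⟨k, rfl⟩, hdeg⟩
      have hk : k.degree < ((p + q - δ : ℕ) : WithBot ℕ) := by
        rcases eq_or_ne k 0 with rfl | h0
        · rw [Polynomial.degree_zero]; exact WithBot.bot_lt_coe _
        rw [degree_mul, hdd] at hdeg
        have heq : ((p + q : ℕ) : WithBot ℕ) = ((δ : ℕ) : WithBot ℕ) + ((p + q - δ : ℕ) : WithBot ℕ) := by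
          rw [← Nat.cast_add, Nat.add_sub_cancel' hδpq]
        rw [heq] at hdeg
        exact (WithBot.add_lt_add_iff_left (by simp)).mp hdeg
      exact ⟨⟨k, Polynomial.mem_degreeLT.mpr hk⟩, rfl⟩
  have hinj : Function.Injective ψ := by
    rw [hψ]
    rw [LinearMap.coe_comp]
    exact (mul_right_injective₀ hd0).comp (Submodule.injective_subtype _)
  rw [← hrange, LinearMap.finrank_range_of_inj hinj, finrank_degreeLT]
end

section
/- Let M(X) be an n×n matrix with entries in K[X], K a field, and let x₀ ∈ K. If the rank of M(x₀) equals n − k, then x₀ is a root of det(M(X)) of multiplicity at least k. -/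
open Polynomial Module Matrix

/-!
Pick an invertible constant matrix `Q` whose columns indexed by some set `s` of size `k` lie in the
kernel of `M(x₀)`. Those `k` columns of `M(X) * Q` vanish at `x₀`, hence are divisible by
`X - x₀`, and the Leibniz expansion gives `(X - x₀)^k ∣ det (M * Q) = det M * det Q`, where
`det Q` is a nonzero constant.
-/

theorem Matrix.pow_card_dvd_det_of_dvd_col {R ι : Type*} [CommRing R] [Fintype ι]
    [DecidableEq ι] (N : Matrix ι ι R) (p : R) (s : Finset ι)
    (hs : ∀ i, ∀ j ∈ s, p ∣ N i j) : p ^ s.card ∣ N.det := by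
  rw [det_apply']
  refine Finset.dvd_sum fun σ _ => Dvd.dvd.mul_left ?_ _
  calc p ^ s.card = ∏ j ∈ s, p := (Finset.prod_const p).symm
    _ ∣ ∏ j ∈ s, N (σ j) j := Finset.prod_dvd_prod_of_dvd _ _ fun j hj => hs _ j hj
    _ ∣ ∏ j, N (σ j) j := Finset.prod_dvd_prod_of_subset _ _ _ (Finset.subset_univ s)

theorem Submodule.exists_basis_finset_mem {K V ι : Type*} [Field K] [AddCommGroup V]
    [Module K V] [FiniteDimensional K V] [Fintype ι] (hι : Fintype.card ι = finrank K V)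
    (W : Submodule K V) :
    ∃ (b : Basis ι K V) (s : Finset ι), s.card = finrank K W ∧ ∀ i ∈ s, b i ∈ W := by
  obtain ⟨p, hWp⟩ := W.exists_isCompl
  let e : Fin (finrank K W) ⊕ Fin (finrank K p) ≃ ι := Fintype.equivOfCardEq <| by
    rw [Fintype.card_sum, Fintype.card_fin, Fintype.card_fin, hι,
      Submodule.finrank_add_eq_of_isCompl hWp]
  let b : Basis ι K V :=
    (((finBasis K W).prod (finBasis K p)).map (W.prodEquivOfIsCompl p hWp)).reindex e
  refine ⟨b, Finset.univ.map (Function.Embedding.inl.trans e.toEmbedding), by simp, ?_⟩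
  simp [b]

theorem Polynomial.X_sub_C_dvd_mul_map_C_apply {R m n o : Type*} [CommRing R] [Fintype n]
    (M : Matrix m n R[X]) (Q : Matrix n o R) (x₀ : R) (j : o)
    (hj : M.map (eval x₀) *ᵥ (fun l => Q l j) = 0) (i : m) :
    X - C x₀ ∣ (M * Q.map C) i j := by
  rw [dvd_iff_isRoot, IsRoot]
  simpa [mul_apply, mulVec, dotProduct, eval_finsetSum] using congrFun hj i

theorem Matrix.finrank_ker_mulVecLin {K m n : Type*} [Field K] [Fintype m] [Fintype n]
    (A : Matrix m n K) : finrank K (LinearMap.ker A.mulVecLin) = Fintype.card n - A.rank := by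
  rw [rank, ← finrank_fintype_fun_eq_card K, ← LinearMap.finrank_range_add_finrank_ker A.mulVecLin]
  simp

/-- If M(X) is an n×n matrix over K[X] and the rank of M(x₀) is n − k, then x₀
is a root of det M(X) of multiplicity at least k, i.e. (X − x₀)^k ∣ det M(X). -/
theorem det_root_multiplicity_of_rank (K : Type*) [Field K]
    (n k : ℕ) (hk : k ≤ n) (M : Matrix (Fin n) (Fin n) (Polynomial K)) (x₀ : K)
    (hrank : (M.map (Polynomial.eval x₀)).rank = n - k) :
    (X - C x₀) ^ k ∣ M.det := by
  set A := M.map (eval x₀)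
  have hker : finrank K (LinearMap.ker A.mulVecLin) = k := by
    rw [A.finrank_ker_mulVecLin, hrank, Fintype.card_fin]
    omega
  obtain ⟨b, s, hs, hbs⟩ :=
    (LinearMap.ker A.mulVecLin).exists_basis_finset_mem (ι := Fin n) (by simp)
  let Q := (Pi.basisFun K (Fin n)).toMatrix b
  have hQ : IsUnit Q.det := Basis.det_apply (Pi.basisFun K (Fin n)) b ▸ Basis.isUnit_det _ b
  have hcol : ∀ i, ∀ j ∈ s, X - C x₀ ∣ (M * Q.map C) i j := fun i j hj =>
    X_sub_C_dvd_mul_map_C_apply M Q x₀ j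
      (by simpa [Q, Basis.toMatrix_apply] using hbs j hj) i
  have hdvd := (M * Q.map C).pow_card_dvd_det_of_dvd_col _ s hcol
  rw [hs, hker, det_mul, ← RingHom.mapMatrix_apply, ← RingHom.map_det] at hdvd
  exact (hQ.map C).dvd_mul_right.mp hdvd
end

section
/- Let F(X,Y), G(X,Y) be bivariate polynomials over ℂ, viewed as polynomials in Y with coefficients in ℂ[X], and let z ∈ ℂ. Then deg gcd(F(z,Y), G(z,Y)) ≤ mult(z, Res_Y(F,G)), where Res_Y is the resultant with respect to Y and mult(z,·) the multiplicity of z as a root of the resultant polynomial in ℂ[X] (with the convention that the inequality holds trivially if the resultant is identically zero). -/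
open Polynomial

/-- The Sylvester matrix of two polynomials f, g of respective degrees p, q:
the first q columns carry the coefficients of f, the remaining p columns those
of g. -/
def sylvester {A : Type*} [CommRing A] (f g : Polynomial A) (p q : ℕ) :
    Matrix (Fin (q + p)) (Fin (q + p)) A :=
  Matrix.of fun i j =>
    if (j : ℕ) < q then
      (if (i : ℕ) ≤ p + j then f.coeff (p + (j : ℕ) - i) else 0)
    else
      (if (i : ℕ) ≤ j then g.coeff ((j : ℕ) - i) else 0)

/-- The resultant of two polynomials f, g of respective degrees p, q, as the
determinant of their Sylvester matrix. -/
noncomputable def resultantOf {A : Type*} [CommRing A] (f g : Polynomial A) (p q : ℕ) : A :=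
  (_root_.sylvester f g p q).det

/-! Let `h = gcd(F(z,Y), G(z,Y))` have degree `d` and write `F(z,Y) = h f₁`, `G(z,Y) = h g₁`.
The pairs `(g₁ Yᵏ, -f₁ Yᵏ)`, `k < d`, satisfy `g₁ Yᵏ F(z,Y) - f₁ Yᵏ G(z,Y) = 0`, so their
coefficient vectors are `d` linearly independent kernel vectors of the Sylvester matrix `S(z)`.
Completing them to a basis gives an invertible constant matrix `P` such that `d` columns of
`S(X) P` vanish at `z`, hence are divisible by `X - z`; so `(X - z)ᵈ` divides
`det (S(X) P) = Res_Y(F,G) · det P`. -/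

namespace Matrix

variable {n : Type*} [Fintype n] [DecidableEq n]

theorem pow_card_dvd_det_of_dvd_col_s14 {R : Type*} [CommRing R] (M : Matrix n n R) (a : R)
    (s : Finset n) (h : ∀ i, ∀ j ∈ s, a ∣ M i j) : a ^ s.card ∣ M.det := by
  choose B hB using h
  let N : Matrix n n R := of fun i j => if hj : j ∈ s then B i j hj else M i j
  have hM : M = of fun i j => (if j ∈ s then a else 1) * N i j := by
    ext i j
    by_cases hj : j ∈ s <;> simp [N, hj, ← hB]
  rw [hM, det_mul_row, Finset.prod_ite_mem, Finset.univ_inter, Finset.prod_const]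
  exact dvd_mul_right _ _

theorem X_sub_C_pow_card_dvd_det_of_eval_mulVec_col_eq_zero {R : Type*} [CommRing R]
    (M : Matrix n n R[X]) (P : Matrix n n R) (hP : IsUnit P.det) (z : R) (s : Finset n)
    (hs : ∀ c ∈ s, M.map (eval z) *ᵥ Pᵀ c = 0) : (X - C z) ^ s.card ∣ M.det := by
  have hcol : ∀ i, ∀ c ∈ s, X - C z ∣ (M * P.map C) i c := by
    intro i c hc
    simpa [dvd_iff_isRoot, mul_apply, eval_finsetSum, mulVec, dotProduct]
      using congrFun (hs c hc) i
  have := pow_card_dvd_det_of_dvd_col_s14 _ _ s hcol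
  rwa [det_mul, ← RingHom.mapMatrix_apply, ← RingHom.map_det,
    (isUnit_C.mpr hP).dvd_mul_right] at this

theorem X_sub_C_pow_card_dvd_det_of_linearIndependent {K ι : Type*} [Field K] [Fintype ι]
    (M : Matrix n n K[X]) (z : K) (v : ι → n → K) (hv : LinearIndependent K v)
    (hker : ∀ k, M.map (eval z) *ᵥ v k = 0) : (X - C z) ^ Fintype.card ι ∣ M.det := by
  let b := Module.Basis.sumExtend hv
  let e := b.indexEquiv (Pi.basisFun K n)
  have hb : ∀ k, b (.inl k) = v k := fun k => by simp [b, Module.Basis.sumExtend]; rfl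
  have hP : IsUnit ((Pi.basisFun K n).toMatrix (b.reindex e)).det := by
    rw [← Module.Basis.det_apply]; exact (Pi.basisFun K n).isUnit_det _
  have := X_sub_C_pow_card_dvd_det_of_eval_mulVec_col_eq_zero M _ hP z
    (Finset.univ.map (Function.Embedding.inl.trans e.toEmbedding)) (by
      simp only [Finset.mem_map, Finset.mem_univ, true_and, forall_exists_index]
      rintro _ k rfl
      convert hker k
      ext i
      simp [Module.Basis.toMatrix_apply, hb])
  simpa using this

end Matrix

section Sylvester

open Matrix

variable {A : Type*} [CommRing A]

theorem coeff_mul_eq_sum_range_rev (f a : A[X]) {k m i : ℕ} (hi : i < m + k)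
    (ha : a.natDegree < m) :
    (a * f).coeff (m + k - 1 - i) =
      ∑ j ∈ Finset.range m,
        (if i ≤ k + j then f.coeff (k + j - i) else 0) * a.coeff (m - 1 - j) := by
  conv_lhs => rw [a.as_sum_range' m ha]
  rw [Finset.sum_mul, finsetSum_coeff, ← Finset.sum_range_reflect]
  refine Finset.sum_congr rfl fun j hj => ?_
  rw [Finset.mem_range] at hj
  rw [← C_mul_X_pow_eq_monomial, mul_assoc, X_pow_mul, coeff_C_mul, coeff_mul_X_pow', mul_comm]
  by_cases hc : i ≤ k + j
  · rw [if_pos (by omega), if_pos hc]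
    congr 2; omega
  · rw [if_neg (by omega), if_neg hc, zero_mul]

def sylvesterVec (a b : A[X]) (p q : ℕ) : Fin (q + p) → A :=
  Fin.append (fun j : Fin q => a.coeff (q - 1 - j)) fun j : Fin p => b.coeff (p - 1 - j)

theorem sylvester_mulVec_sylvesterVec (f g a b : A[X]) (p q : ℕ)
    (ha : a.natDegree < q) (hb : b.natDegree < p) :
    _root_.sylvester f g p q *ᵥ sylvesterVec a b p q =
      fun i : Fin (q + p) => (a * f + b * g).coeff (q + p - 1 - i) := by
  ext i
  rw [coeff_add, coeff_mul_eq_sum_range_rev f a i.isLt ha,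
    show q + p - 1 - (i : ℕ) = p + q - 1 - i by omega,
    coeff_mul_eq_sum_range_rev g b (by omega) hb, ← Fin.sum_univ_eq_sum_range,
    ← Fin.sum_univ_eq_sum_range]
  simp only [Matrix.mulVec, dotProduct, Fin.sum_univ_add, _root_.sylvester, sylvesterVec,
    Matrix.of_apply, Fin.append_left, Fin.append_right, Fin.val_castAdd, Fin.val_natAdd]
  congr 1
  · exact Finset.sum_congr rfl fun j _ => by rw [if_pos j.isLt]
  · exact Finset.sum_congr rfl fun j _ => by rw [if_neg (by omega)]

theorem sylvester_map {B : Type*} [CommRing B] (φ : A →+* B) (f g : A[X]) (p q : ℕ) :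
    (_root_.sylvester f g p q).map φ = _root_.sylvester (f.map φ) (g.map φ) p q := by
  ext i j
  simp [_root_.sylvester, apply_ite φ, coeff_map]

end Sylvester

section Field

open Matrix

variable {K : Type*} [Field K]

theorem linearIndependent_sylvesterVec_mul_X_pow {a : K[X]} (ha : a ≠ 0) (b : K[X])
    {p q d : ℕ} (hd : a.natDegree + d ≤ q) :
    LinearIndependent K fun k : Fin d =>
      sylvesterVec (a * X ^ (k : ℕ)) (b * X ^ (k : ℕ)) p q := by
  let first : (Fin (q + p) → K) →ₗ[K] K[X] :=
    ∑ j : Fin q, (monomial (q - 1 - j)).comp (LinearMap.proj (Fin.castAdd p j))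
  have first_sylvesterVec (c e : K[X]) (hc : c.natDegree < q) :
      first (sylvesterVec c e p q) = c := by
    simp only [first, LinearMap.sum_apply, LinearMap.comp_apply,
      LinearMap.proj_apply, sylvesterVec, Fin.append_left]
    rw [Fin.sum_univ_eq_sum_range (fun j => monomial (q - 1 - j) (c.coeff (q - 1 - j))),
      Finset.sum_range_reflect (fun j => monomial j (c.coeff j)), ← c.as_sum_range' q hc]
  apply LinearIndependent.of_comp first
  have hfirst :
      first ∘ (fun k : Fin d => sylvesterVec (a * X ^ (k : ℕ)) (b * X ^ (k : ℕ)) p q) =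
      (LinearMap.mulLeft K a) ∘ (basisMonomials K) ∘ Fin.val := by
    ext1 k
    simp only [Function.comp_apply, coe_basisMonomials, LinearMap.mulLeft_apply]
    rw [first_sylvesterVec _ _ (by rw [natDegree_mul_X_pow _ ha]; omega), X_pow_eq_monomial]
  rw [hfirst]
  exact ((basisMonomials K).linearIndependent.comp _ Fin.val_injective).map'
    _ (LinearMap.ker_eq_bot.mpr (mul_right_injective₀ ha))

theorem exists_linearIndependent_sylvester_mulVec_eq_zero [DecidableEq K] {f g : K[X]}
    {p q : ℕ} (hf : f.natDegree = p) (hg : g.natDegree = q) (hf0 : f ≠ 0) (hg0 : g ≠ 0) :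
    ∃ v : Fin (EuclideanDomain.gcd f g).natDegree → Fin (q + p) → K,
      LinearIndependent K v ∧ ∀ k, _root_.sylvester f g p q *ᵥ v k = 0 := by
  set h := EuclideanDomain.gcd f g
  obtain ⟨f₁, hf₁⟩ := EuclideanDomain.gcd_dvd_left f g
  obtain ⟨g₁, hg₁⟩ := EuclideanDomain.gcd_dvd_right f g
  have hh0 : h ≠ 0 := fun h0 => hf0 (EuclideanDomain.gcd_eq_zero_iff.mp h0).1
  have hf₁0 : f₁ ≠ 0 := by rintro rfl; exact hf0 (by rw [hf₁, mul_zero])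
  have hg₁0 : g₁ ≠ 0 := by rintro rfl; exact hg0 (by rw [hg₁, mul_zero])
  have hdf : f₁.natDegree + h.natDegree = p := by
    rw [← hf, hf₁, natDegree_mul hh0 hf₁0, add_comm]
  have hdg : g₁.natDegree + h.natDegree = q := by
    rw [← hg, hg₁, natDegree_mul hh0 hg₁0, add_comm]
  refine ⟨fun k => sylvesterVec (g₁ * X ^ (k : ℕ)) (-f₁ * X ^ (k : ℕ)) p q,
    linearIndependent_sylvesterVec_mul_X_pow hg₁0 _ hdg.le, fun k => ?_⟩
  have hcofactors : g₁ * X ^ (k : ℕ) * f + -f₁ * X ^ (k : ℕ) * g = 0 := by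
    linear_combination (g₁ * X ^ (k : ℕ)) * hf₁ - (f₁ * X ^ (k : ℕ)) * hg₁
  rw [sylvester_mulVec_sylvesterVec _ _ _ _ _ _
    (by rw [natDegree_mul_X_pow _ hg₁0]; omega)
    (by rw [natDegree_mul_X_pow _ (neg_ne_zero.mpr hf₁0), natDegree_neg]; omega), hcofactors]
  rfl

end Field

theorem deg_gcd_le_mult_resultant_general
    (F G : Polynomial (Polynomial ℂ)) (p q : ℕ)
    (hp : F.natDegree = p) (hq : G.natDegree = q)
    (z : ℂ)
    (hFlc : (F.leadingCoeff).eval z ≠ 0) (hGlc : (G.leadingCoeff).eval z ≠ 0)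
    (hres : resultantOf F G p q ≠ 0) :
    (EuclideanDomain.gcd (F.map (evalRingHom z)) (G.map (evalRingHom z))).natDegree ≤
      (resultantOf F G p q).rootMultiplicity z := by
  have hF0 : F.map (evalRingHom z) ≠ 0 := by
    rw [← leadingCoeff_ne_zero, leadingCoeff_map_of_leadingCoeff_ne_zero _ hFlc]; exact hFlc
  have hG0 : G.map (evalRingHom z) ≠ 0 := by
    rw [← leadingCoeff_ne_zero, leadingCoeff_map_of_leadingCoeff_ne_zero _ hGlc]; exact hGlc
  obtain ⟨v, hv, hker⟩ := exists_linearIndependent_sylvester_mulVec_eq_zero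
    (hp ▸ natDegree_map_of_leadingCoeff_ne_zero _ hFlc)
    (hq ▸ natDegree_map_of_leadingCoeff_ne_zero _ hGlc) hF0 hG0
  rw [le_rootMultiplicity_iff hres]
  simpa [resultantOf] using Matrix.X_sub_C_pow_card_dvd_det_of_linearIndependent
    (_root_.sylvester F G p q) z v hv (by rwa [← coe_evalRingHom, sylvester_map])

/-- For bivariate F, G ∈ ℂ[X][Y] and z ∈ ℂ at which the leading coefficients
in Y do not vanish, deg gcd(F(z,Y), G(z,Y)) ≤ mult(z, Res_Y(F,G)), provided the
resultant Res_Y(F,G) ∈ ℂ[X] is nonzero. -/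
theorem deg_gcd_le_mult_resultant
    (F G : Polynomial (Polynomial ℂ)) (p q : ℕ)
    (hp : F.natDegree = p) (hq : G.natDegree = q) (hp1 : 1 ≤ p) (hq1 : 1 ≤ q)
    (z : ℂ)
    (hFlc : (F.leadingCoeff).eval z ≠ 0) (hGlc : (G.leadingCoeff).eval z ≠ 0)
    (hres : resultantOf F G p q ≠ 0) :
    (EuclideanDomain.gcd (F.map (evalRingHom z)) (G.map (evalRingHom z))).natDegree ≤
      (resultantOf F G p q).rootMultiplicity z :=
  deg_gcd_le_mult_resultant_general F G p q hp hq z hFlc hGlc hres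
end

section
/- Let F(X,Y) ∈ ℂ[X,Y] and let (z,z') be an X-critical point of F, i.e. F(z,z') = ∂_Y F(z,z') = 0, with z' a root of F(z,Y) of multiplicity μ ≥ 2. Suppose Res_X(F, ∂_Y F)(Y) = U(X,Y)·F(X,Y) + V(X,Y)·∂_Y F(X,Y) for some U, V ∈ ℂ[X,Y] (Bézout identity for the resultant), and that ∂_Y^{(i)} F(z,z') = 0 for i = 0,…,μ−1. Then z' is a root of R_Y(Y) := Res_X(F, ∂_Y F)(Y) of multiplicity at least μ − 1. -/
open Polynomial

/-- Let F ∈ ℂ[X][Y] and (z,z') an X-critical point of F with z' a root of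
F(z,Y) of multiplicity μ ≥ 2 (i.e. ∂_Y^{(i)}F(z,z') = 0 for i = 0,…,μ−1).
Suppose R_Y(Y) := Res_X(F,∂_Y F)(Y) ≠ 0 satisfies the Bézout identity
R_Y = U·F + V·∂_Y F.  Then z' is a root of R_Y of multiplicity at least μ−1. -/
theorem root_mult_resultant_of_critical
    (F U V : Polynomial (Polynomial ℂ)) (R : Polynomial ℂ) (hR : R ≠ 0)
    (hBez : R.map (Polynomial.C : ℂ →+* Polynomial ℂ) = U * F + V * derivative F)
    (z z' : ℂ) (μ : ℕ) (hμ : 2 ≤ μ)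
    (hvanish : ∀ i < μ, (derivative^[i] (F.map (evalRingHom z))).eval z' = 0) :
    (X - C z') ^ (μ - 1) ∣ R := by
  set f : Polynomial ℂ := F.map (evalRingHom z) with hf
  have hRmap : R = U.map (evalRingHom z) * f + V.map (evalRingHom z) * derivative f := by
    have hid : (evalRingHom z).comp (C : ℂ →+* Polynomial ℂ) = RingHom.id ℂ := by
      ext x; simp
    have := congrArg (Polynomial.map (evalRingHom z)) hBez
    simpa [Polynomial.map_map, hid, Polynomial.derivative_map, hf,
      Polynomial.map_add, Polynomial.map_mul] using this
  have hfne : f ≠ 0 := by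
    intro h0
    apply hR
    rw [hRmap, h0]
    simp
  have hmult : μ - 1 < f.rootMultiplicity z' := by
    apply lt_rootMultiplicity_of_isRoot_iterate_derivative_of_mem_nonZeroDivisors' hfne
    · intro m hm
      exact hvanish m (lt_of_le_of_lt hm (Nat.sub_lt (by omega) one_pos))
    · intro m _ hm0
      exact mem_nonZeroDivisors_of_ne_zero (by exact_mod_cast hm0)
  have hdvdf : (X - C z') ^ μ ∣ f :=
    (pow_dvd_pow _ (by omega)).trans (f.pow_rootMultiplicity_dvd z')
  have hdvd1 : (X - C z') ^ (μ - 1) ∣ f := (pow_dvd_pow _ (by omega)).trans hdvdf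
  have hdvd2 : (X - C z') ^ (μ - 1) ∣ derivative f :=
    pow_sub_one_dvd_derivative_of_pow_dvd hdvdf
  rw [hRmap]
  exact dvd_add (hdvd1.mul_left _) (hdvd2.mul_left _)
end

section
/- Let F ∈ ℤ[X,Y] written as F = f₀(X) + f₁(X)Y + ⋯ + f_{n_y}(X)Y^{n_y}, and let R* ∈ ℤ[X] be a square-free polynomial. Define R*_{≤ n_y} := R*, and inductively R*_{≤ ℓ−1} := gcd(R*_{≤ ℓ}, f_ℓ) and R*_ℓ := R*_{≤ ℓ} / R*_{≤ ℓ−1} for ℓ = n_y,…,1. Then for any root z of R* and any ℓ ∈ [0, n_y]: deg_Y F(z,Y) ≤ ℓ iff R*_{≤ ℓ}(z) = 0, and deg_Y F(z,Y) = ℓ iff R*_ℓ(z) = 0. -/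
open Polynomial

lemma aeval_euclid_gcd_eq_zero_iff (p q : Polynomial ℚ) (z : ℂ) :
    aeval z (EuclideanDomain.gcd p q) = 0 ↔ aeval z p = 0 ∧ aeval z q = 0 := by
  constructor
  · intro h
    obtain ⟨a, ha⟩ := EuclideanDomain.gcd_dvd_left p q
    obtain ⟨b, hb⟩ := EuclideanDomain.gcd_dvd_right p q
    exact ⟨by rw [ha, map_mul, h, zero_mul], by rw [hb, map_mul, h, zero_mul]⟩
  · rintro ⟨hp, hq⟩
    rw [EuclideanDomain.gcd_eq_gcd_ab]
    simp [hp, hq]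

/-- Let F = ∑ f_ℓ(X) Y^ℓ ∈ ℤ[X][Y] and R* ∈ ℚ[X] square-free.  With
R*_{≤ n_y} := R*, R*_{≤ ℓ−1} := gcd(R*_{≤ ℓ}, f_ℓ) and R*_ℓ := R*_{≤ ℓ}/R*_{≤ ℓ−1}
(and R*_0 := R*_{≤0}), for every root z of R* with F(z,Y) ≢ 0 and every
ℓ ∈ [0,n_y]:  deg_Y F(z,Y) ≤ ℓ ⟺ R*_{≤ ℓ}(z) = 0, and
deg_Y F(z,Y) = ℓ ⟺ R*_ℓ(z) = 0. -/
theorem degree_fiber_iff_factor_vanishes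
    (F : Polynomial (Polynomial ℤ)) (hF : F ≠ 0) (ny : ℕ) (hny : F.natDegree = ny)
    (Rstar : Polynomial ℚ) (hsf : Squarefree Rstar)
    (Rle Rl : ℕ → Polynomial ℚ)
    (hRtop : Rle ny = Rstar)
    (hRle : ∀ ℓ, 1 ≤ ℓ → ℓ ≤ ny →
      Rle (ℓ - 1) = EuclideanDomain.gcd (Rle ℓ) ((F.coeff ℓ).map (Int.castRingHom ℚ)))
    (hRl : ∀ ℓ, 1 ≤ ℓ → ℓ ≤ ny → Rl ℓ = Rle ℓ / Rle (ℓ - 1))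
    (hRl0 : Rl 0 = Rle 0) :
    ∀ z : ℂ, aeval z Rstar = 0 →
      F.map ((evalRingHom z).comp (mapRingHom (Int.castRingHom ℂ))) ≠ 0 →
      ∀ ℓ ≤ ny,
        ((F.map ((evalRingHom z).comp (mapRingHom (Int.castRingHom ℂ)))).natDegree ≤ ℓ ↔
            aeval z (Rle ℓ) = 0) ∧
        ((F.map ((evalRingHom z).comp (mapRingHom (Int.castRingHom ℂ)))).natDegree = ℓ ↔
            aeval z (Rl ℓ) = 0) := by
  intro z hz hG0 ℓ hℓ
  set φ : Polynomial ℤ →+* ℂ := (evalRingHom z).comp (mapRingHom (Int.castRingHom ℂ)) with hφ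
  set G : Polynomial ℂ := F.map φ with hGdef
  -- coefficients of G
  have hcoeff : ∀ k, aeval z ((F.coeff k).map (Int.castRingHom ℚ)) = G.coeff k := by
    intro k
    rw [hGdef, coeff_map, hφ]
    simp only [aeval_def, eval₂_map, RingHom.comp_apply, coe_mapRingHom, coe_evalRingHom,
      eval_map]
    rw [show (algebraMap ℚ ℂ).comp (Int.castRingHom ℚ) = Int.castRingHom ℂ from
      RingHom.ext_int _ _]
  have hR0 : Rstar ≠ 0 := hsf.ne_zero
  -- downward induction: for ℓ + j = ny, Rle ℓ is nonzero, divides Rstar, and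
  -- the degree-≤ criterion holds.
  have main : ∀ j : ℕ, ∀ m : ℕ, m + j = ny →
      Rle m ≠ 0 ∧ Rle m ∣ Rstar ∧ (G.natDegree ≤ m ↔ aeval z (Rle m) = 0) := by
    intro j
    induction j with
    | zero =>
        intro m hm
        simp only [Nat.add_zero] at hm
        subst hm
        rw [hRtop]
        refine ⟨hR0, dvd_refl _, ?_⟩
        constructor
        · intro _; exact hz
        · intro _
          calc G.natDegree ≤ F.natDegree := natDegree_map_le
            _ = m := hny
    | succ j ih =>
        intro m hm
        have hm1 : (m + 1) + j = ny := by omega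
        obtain ⟨hne, hdvd, hiff⟩ := ih (m + 1) hm1
        have h1 : 1 ≤ m + 1 := le_refl 1 |>.trans (by omega)
        have h2 : m + 1 ≤ ny := by omega
        have hg := hRle (m + 1) h1 h2
        simp only [Nat.add_sub_cancel] at hg
        have hgczero : aeval z (Rle m) = 0 ↔
            aeval z (Rle (m + 1)) = 0 ∧ aeval z ((F.coeff (m + 1)).map (Int.castRingHom ℚ)) = 0 := by
          rw [hg]; exact aeval_euclid_gcd_eq_zero_iff _ _ z
        refine ⟨?_, ?_, ?_⟩
        · rw [hg]
          intro hzero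
          exact hne ((EuclideanDomain.gcd_eq_zero_iff).mp hzero).1
        · rw [hg]
          exact (EuclideanDomain.gcd_dvd_left _ _).trans hdvd
        · rw [hgczero, ← hiff, hcoeff]
          constructor
          · intro h
            exact ⟨h.trans (by omega), coeff_eq_zero_of_natDegree_lt (by omega)⟩
          · rintro ⟨h1', h2'⟩
            by_contra hc
            have : G.natDegree = m + 1 := by omega
            have := leadingCoeff_ne_zero.mpr hG0
            rw [leadingCoeff, ‹G.natDegree = m + 1›] at this
            exact this h2'
  obtain ⟨hneℓ, hdvdℓ, hiffℓ⟩ := main (ny - ℓ) ℓ (by omega)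
  refine ⟨hiffℓ, ?_⟩
  -- second part
  rcases Nat.eq_zero_or_pos ℓ with h0 | hpos
  · subst h0
    rw [hRl0, ← hiffℓ]
    omega
  · obtain ⟨hnem, hdvdm, hiffm⟩ := main (ny - (ℓ - 1)) (ℓ - 1) (by omega)
    have hsplit : Rle (ℓ - 1) * Rl ℓ = Rle ℓ := by
      rw [hRl ℓ hpos hℓ]
      refine EuclideanDomain.mul_div_cancel' hnem ?_
      rw [hRle ℓ hpos hℓ]
      exact EuclideanDomain.gcd_dvd_left _ _
    -- both factors cannot vanish at z, by squarefreeness over ℂ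
    have hsfC : Squarefree (Rstar.map (algebraMap ℚ ℂ)) :=
      ((PerfectField.separable_iff_squarefree.mpr hsf).map).squarefree
    have hexcl : ¬ (aeval z (Rle (ℓ - 1)) = 0 ∧ aeval z (Rl ℓ) = 0) := by
      rintro ⟨ha, hb⟩
      have h1 : (X - C z) ∣ (Rle (ℓ - 1)).map (algebraMap ℚ ℂ) :=
        dvd_iff_isRoot.mpr (by rwa [IsRoot, eval_map, ← aeval_def])
      have h2 : (X - C z) ∣ (Rl ℓ).map (algebraMap ℚ ℂ) :=
        dvd_iff_isRoot.mpr (by rwa [IsRoot, eval_map, ← aeval_def])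
      have h3 : (X - C z) * (X - C z) ∣ Rstar.map (algebraMap ℚ ℂ) := by
        have : (X - C z) * (X - C z) ∣ (Rle ℓ).map (algebraMap ℚ ℂ) := by
          rw [← hsplit, Polynomial.map_mul]
          exact mul_dvd_mul h1 h2
        exact this.trans (Polynomial.map_dvd _ hdvdℓ)
      exact (Polynomial.not_isUnit_X_sub_C z) (hsfC _ h3)
    constructor
    · intro hdeg
      have hle : aeval z (Rle ℓ) = 0 := hiffℓ.mp (le_of_eq hdeg)
      have hnotm : ¬ aeval z (Rle (ℓ - 1)) = 0 := by
        intro h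
        have := hiffm.mpr h
        omega
      have : aeval z (Rle (ℓ - 1)) * aeval z (Rl ℓ) = 0 := by
        rw [← map_mul, hsplit]; exact hle
      rcases mul_eq_zero.mp this with h | h
      · exact absurd h hnotm
      · exact h
    · intro hrl
      have hle : aeval z (Rle ℓ) = 0 := by
        rw [← hsplit, map_mul, hrl, mul_zero]
      have hnotm : ¬ aeval z (Rle (ℓ - 1)) = 0 := fun h => hexcl ⟨h, hrl⟩
      have hd1 : G.natDegree ≤ ℓ := hiffℓ.mpr hle
      have hd2 : ¬ G.natDegree ≤ ℓ - 1 := fun h => hnotm (hiffm.mp h)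
      omega
end
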